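/- Two elements α, β of IEnd(P_n) are H-related in IEnd(P_n) if and only if Dom α = Dom β, Im α = Im β, and both α⁻¹β and αβ⁻¹ are partial automorphisms of P_n. -/

import Mathlib

open scoped Classical

/-- `adj u v` means `|u - v| = 1`, i.e. `u` and `v` are adjacent in the path. -/
def adj (u v : ℕ) : Prop := u + 1 = v ∨ v + 1 = u

/-- `f` is an injective partial endomorphism of the path `P_n` on `{1,…,n}`. -/
structure IsIEnd (n : ℕ) (f : ℕ →. ℕ) : Prop where
  dom_subset : f.Dom ⊆ Set.Icc 1 n
  ran_subset : f.ran ⊆ Set.Icc 1 n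
  inj : ∀ ⦃x y a : ℕ⦄, a ∈ f x → a ∈ f y → x = y
  edge : ∀ ⦃u v a b : ℕ⦄, a ∈ f u → b ∈ f v → adj u v → adj a b

/-- `f` is a partial automorphism of the path `P_n`. -/
def IsPAut (n : ℕ) (f : ℕ →. ℕ) : Prop :=
  IsIEnd n f ∧ ∀ ⦃u v a b : ℕ⦄, a ∈ f u → b ∈ f v → adj a b → adj u v

/-- Left-to-right composition of partial maps: `x (pcomp f g) = (x f) g`. -/
def pcomp (f g : ℕ →. ℕ) : ℕ →. ℕ := PFun.comp g f

/-- The inverse of an injective partial map. -/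
noncomputable def pinv (f : ℕ →. ℕ) : ℕ →. ℕ :=
  fun y => ⟨∃ x, y ∈ f x, fun h => h.choose⟩

/-- `I` is an interval of `X`: a set of consecutive integers contained in `X`. -/
def IsIntervalOf (I X : Set ℕ) : Prop :=
  I ⊆ X ∧ ∀ ⦃x⦄, x ∈ I → ∀ ⦃y⦄, y ∈ I → ∀ ⦃z : ℕ⦄, x < z → z < y → z ∈ I

/-- `I` is a maximal interval of `X`. -/
def IsMaxIntervalOf (I X : Set ℕ) : Prop :=
  IsIntervalOf I X ∧ ∀ J, IsIntervalOf J X → I ⊆ J → I = J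

/-!
If `β = αγ` then `α⁻¹β` is a restriction of `γ`, and if moreover `α = βδ` then its inverse
`β⁻¹α` is a restriction of `δ`; restrictions of injective partial endomorphisms are again
such, so `α⁻¹β` is a partial automorphism. Conversely `β = α(α⁻¹β)` as soon as
`Dom β ⊆ Dom α`, so the partial automorphisms `α⁻¹β` and `(α⁻¹β)⁻¹` witness `α R β`.
The `L`-relation is dual, with images in place of domains and `αβ⁻¹` in place of `α⁻¹β`.
-/

def PInjective (f : ℕ →. ℕ) : Prop :=
  ∀ ⦃x y a : ℕ⦄, a ∈ f x → a ∈ f y → x = y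

lemma mem_pcomp {f g : ℕ →. ℕ} {x a : ℕ} :
    a ∈ pcomp f g x ↔ ∃ y, y ∈ f x ∧ a ∈ g y :=
  Part.mem_bind_iff

lemma mem_of_mem_pinv {f : ℕ →. ℕ} {x a : ℕ} (h : a ∈ pinv f x) : x ∈ f a := by
  obtain ⟨hx, rfl⟩ := h
  exact hx.choose_spec

lemma mem_pinv {f : ℕ →. ℕ} (hf : PInjective f) {x a : ℕ} : a ∈ pinv f x ↔ x ∈ f a :=
  ⟨mem_of_mem_pinv, fun hx => ⟨⟨a, hx⟩, hf (⟨a, hx⟩ : ∃ u, x ∈ f u).choose_spec hx⟩⟩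

lemma pinv_pInjective (f : ℕ →. ℕ) : PInjective (pinv f) := fun _ _ _ hx hy =>
  Part.mem_unique (mem_of_mem_pinv hx) (mem_of_mem_pinv hy)

lemma pinv_pinv {f : ℕ →. ℕ} (hf : PInjective f) : pinv (pinv f) = f :=
  PFun.ext fun _ _ => (mem_pinv (pinv_pInjective f)).trans (mem_pinv hf)

lemma pinv_pcomp {f g : ℕ →. ℕ} (hf : PInjective f) (hg : PInjective g) :
    pinv (pcomp f g) = pcomp (pinv g) (pinv f) := by
  have hfg : PInjective (pcomp f g) := by
    intro x y a hx hy
    obtain ⟨u, hu, hau⟩ := mem_pcomp.1 hx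
    obtain ⟨v, hv, hav⟩ := mem_pcomp.1 hy
    exact hf hu (hg hau hav ▸ hv)
  refine PFun.ext fun x a => ?_
  rw [mem_pinv hfg, mem_pcomp, mem_pcomp]
  simp only [mem_pinv hf, mem_pinv hg, and_comm]

lemma pinv_pcomp_pinv_left {f g : ℕ →. ℕ} (hf : PInjective f) (hg : PInjective g) :
    pinv (pcomp (pinv f) g) = pcomp (pinv g) f := by
  rw [pinv_pcomp (pinv_pInjective f) hg, pinv_pinv hf]

lemma pinv_pcomp_pinv_right {f g : ℕ →. ℕ} (hf : PInjective f) (hg : PInjective g) :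
    pinv (pcomp f (pinv g)) = pcomp g (pinv f) := by
  rw [pinv_pcomp hf (pinv_pInjective g), pinv_pinv hg]

lemma dom_pcomp_subset (f g : ℕ →. ℕ) : (pcomp f g).Dom ⊆ f.Dom := by
  intro x hx
  obtain ⟨a, ha⟩ := (PFun.mem_dom _ x).1 hx
  obtain ⟨y, hy, -⟩ := mem_pcomp.1 ha
  exact (PFun.mem_dom f x).2 ⟨y, hy⟩

lemma ran_pcomp_subset (f g : ℕ →. ℕ) : (pcomp f g).ran ⊆ g.ran := by
  rintro a ⟨x, hx⟩
  obtain ⟨y, -, hy⟩ := mem_pcomp.1 hx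
  exact ⟨y, hy⟩

lemma graph_pcomp_pinv_left_subset {f g h : ℕ →. ℕ} (hf : PInjective f) (hg : g = pcomp f h) :
    (pcomp (pinv f) g).graph ⊆ h.graph := by
  rintro ⟨x, a⟩ hxa
  obtain ⟨z, hz, ha⟩ := mem_pcomp.1 hxa
  obtain ⟨y, hy, hay⟩ := mem_pcomp.1 (hg ▸ ha)
  rwa [Part.mem_unique hy ((mem_pinv hf).1 hz)] at hay

lemma graph_pcomp_pinv_right_subset {f g h : ℕ →. ℕ} (hg : PInjective g) (hf : f = pcomp h g) :
    (pcomp f (pinv g)).graph ⊆ h.graph := by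
  rintro ⟨x, a⟩ hxa
  obtain ⟨z, hz, ha⟩ := mem_pcomp.1 hxa
  obtain ⟨y, hy, hzy⟩ := mem_pcomp.1 (hf ▸ hz)
  rwa [hg hzy ((mem_pinv hg).1 ha)] at hy

lemma pcomp_pcomp_pinv_of_dom_subset {f g : ℕ →. ℕ} (hf : PInjective f) (hdom : g.Dom ⊆ f.Dom) :
    pcomp f (pcomp (pinv f) g) = g := by
  refine PFun.ext fun x a => ⟨fun h => ?_, fun ha => ?_⟩
  · obtain ⟨y, hy, hya⟩ := mem_pcomp.1 h
    obtain ⟨z, hz, ha⟩ := mem_pcomp.1 hya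
    exact hf ((mem_pinv hf).1 hz) hy ▸ ha
  · obtain ⟨y, hy⟩ := (PFun.mem_dom f x).1 (hdom ((PFun.mem_dom g x).2 ⟨a, ha⟩))
    exact mem_pcomp.2 ⟨y, hy, mem_pcomp.2 ⟨x, (mem_pinv hf).2 hy, ha⟩⟩

lemma pcomp_pinv_pcomp_of_ran_subset {f g : ℕ →. ℕ} (hg : PInjective g) (hran : f.ran ⊆ g.ran) :
    pcomp (pcomp f (pinv g)) g = f := by
  refine PFun.ext fun x a => ⟨fun h => ?_, fun ha => ?_⟩
  · obtain ⟨y, hy, hya⟩ := mem_pcomp.1 h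
    obtain ⟨z, hz, hzy⟩ := mem_pcomp.1 hy
    exact Part.mem_unique hya ((mem_pinv hg).1 hzy) ▸ hz
  · obtain ⟨y, hy⟩ := hran ⟨x, ha⟩
    exact mem_pcomp.2 ⟨y, mem_pcomp.2 ⟨a, ha, (mem_pinv hg).2 hy⟩, hy⟩

lemma IsIEnd.mono {n : ℕ} {f g : ℕ →. ℕ} (hg : IsIEnd n g) (hfg : f.graph ⊆ g.graph) :
    IsIEnd n f where
  dom_subset x hx := by
    obtain ⟨a, ha⟩ := (PFun.mem_dom f x).1 hx
    exact hg.dom_subset ((PFun.mem_dom g x).2 ⟨a, @hfg (x, a) ha⟩)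
  ran_subset := fun a ⟨x, hx⟩ => hg.ran_subset ⟨x, @hfg (x, a) hx⟩
  inj x y a hx hy := hg.inj (@hfg (x, a) hx) (@hfg (y, a) hy)
  edge u v a b ha hb := hg.edge (@hfg (u, a) ha) (@hfg (v, b) hb)

lemma isPAut_iff_isIEnd_pinv {n : ℕ} {f : ℕ →. ℕ} (hf : IsIEnd n f) :
    IsPAut n f ↔ IsIEnd n (pinv f) := by
  have hf' : PInjective f := hf.inj
  refine ⟨fun h => ⟨?_, ?_, pinv_pInjective f, ?_⟩, fun h => ⟨hf, ?_⟩⟩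
  · intro x hx
    obtain ⟨a, ha⟩ := (PFun.mem_dom _ x).1 hx
    exact hf.ran_subset ⟨a, (mem_pinv hf').1 ha⟩
  · rintro a ⟨x, hx⟩
    exact hf.dom_subset ((PFun.mem_dom f a).2 ⟨x, (mem_pinv hf').1 hx⟩)
  · intro u v a b ha hb
    exact h.2 ((mem_pinv hf').1 ha) ((mem_pinv hf').1 hb)
  · intro u v a b ha hb
    exact h.edge ((mem_pinv hf').2 ha) ((mem_pinv hf').2 hb)

lemma isPAut_pcomp_pinv_left {n : ℕ} {α β γ δ : ℕ →. ℕ} (hα : PInjective α) (hβ : PInjective β)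
    (hγ : IsIEnd n γ) (hδ : IsIEnd n δ) (hβα : β = pcomp α γ) (hαβ : α = pcomp β δ) :
    IsPAut n (pcomp (pinv α) β) := by
  have h := hγ.mono (graph_pcomp_pinv_left_subset hα hβα)
  rw [isPAut_iff_isIEnd_pinv h, pinv_pcomp_pinv_left hα hβ]
  exact hδ.mono (graph_pcomp_pinv_left_subset hβ hαβ)

lemma isPAut_pcomp_pinv_right {n : ℕ} {α β γ δ : ℕ →. ℕ} (hα : PInjective α) (hβ : PInjective β)
    (hγ : IsIEnd n γ) (hδ : IsIEnd n δ) (hαβ : α = pcomp γ β) (hβα : β = pcomp δ α) :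
    IsPAut n (pcomp α (pinv β)) := by
  have h := hγ.mono (graph_pcomp_pinv_right_subset hβ hαβ)
  rw [isPAut_iff_isIEnd_pinv h, pinv_pcomp_pinv_right hα hβ]
  exact hδ.mono (graph_pcomp_pinv_right_subset hα hβα)

theorem stmt9 (n : ℕ) (α β : ℕ →. ℕ) (hα : IsIEnd n α) (hβ : IsIEnd n β) :
    ((∃ γ δ : ℕ →. ℕ, IsIEnd n γ ∧ IsIEnd n δ ∧ α = pcomp γ β ∧ β = pcomp δ α) ∧
     (∃ γ δ : ℕ →. ℕ, IsIEnd n γ ∧ IsIEnd n δ ∧ β = pcomp α γ ∧ α = pcomp β δ)) ↔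
    (α.Dom = β.Dom ∧ α.ran = β.ran ∧
      IsPAut n (pcomp (pinv α) β) ∧ IsPAut n (pcomp α (pinv β))) := by
  constructor
  · rintro ⟨⟨γ, δ, hγ, hδ, hαβ, hβα⟩, ⟨γ', δ', hγ', hδ', hβα', hαβ'⟩⟩
    refine ⟨?_, ?_, isPAut_pcomp_pinv_left hα.inj hβ.inj hγ' hδ' hβα' hαβ',
      isPAut_pcomp_pinv_right hα.inj hβ.inj hγ hδ hαβ hβα⟩
    · exact (hαβ' ▸ dom_pcomp_subset β δ').antisymm (hβα' ▸ dom_pcomp_subset α γ')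
    · exact (hαβ ▸ ran_pcomp_subset γ β).antisymm (hβα ▸ ran_pcomp_subset δ α)
  · rintro ⟨hdom, hran, hR, hL⟩
    have hL' := (isPAut_iff_isIEnd_pinv hL.1).1 hL
    have hR' := (isPAut_iff_isIEnd_pinv hR.1).1 hR
    rw [pinv_pcomp_pinv_right hα.inj hβ.inj] at hL'
    rw [pinv_pcomp_pinv_left hα.inj hβ.inj] at hR'
    exact ⟨⟨_, _, hL.1, hL', (pcomp_pinv_pcomp_of_ran_subset hβ.inj hran.le).symm,
        (pcomp_pinv_pcomp_of_ran_subset hα.inj hran.ge).symm⟩,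
      ⟨_, _, hR.1, hR', (pcomp_pcomp_pinv_of_dom_subset hα.inj hdom.ge).symm,
        (pcomp_pcomp_pinv_of_dom_subset hβ.inj hdom.le).symm⟩⟩
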